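/- For n×n positive definite complex matrices A, B and n×n positive semidefinite complex matrices C, D, one has Tr[(A−B)(B⁻¹−A⁻¹)] ≥ Tr[(A−B)(B+D)⁻¹(A−B)(A+C)⁻¹], where both traces are real numbers. -/

import Mathlib

/-!
Put `X = A - B`. Since `B⁻¹ - A⁻¹ = B⁻¹ X A⁻¹`, the left-hand side is `Tr[X B⁻¹ X A⁻¹]` and the
right-hand side is `Tr[X (B + D)⁻¹ X (A + C)⁻¹]`. Matrix inversion is operator antitone, so
`(B + D)⁻¹ ≤ B⁻¹` and `(A + C)⁻¹ ≤ A⁻¹`, and `(P, Q) ↦ Tr[X P X Q]` is monotone on pairs of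
positive semidefinite matrices because `Tr[X P X Q] ≥ 0` for such pairs (`X P X` is again positive
semidefinite). Both inequalities hold in the partial order of `ℂ`, which also forces the traces
to be real.
-/

open Matrix ComplexOrder

open scoped MatrixOrder

namespace Matrix

variable {ι 𝕜 : Type*} [Fintype ι] [RCLike 𝕜]

theorem PosSemidef.trace_mul_nonneg {P Q : Matrix ι ι 𝕜} (hP : P.PosSemidef)
    (hQ : Q.PosSemidef) : 0 ≤ (P * Q).trace := by
  classical
  obtain ⟨B, rfl⟩ := CStarAlgebra.nonneg_iff_eq_star_mul_self.mp hP.nonneg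
  rw [mul_assoc, trace_mul_comm]
  exact (hQ.mul_mul_conjTranspose_same B).trace_nonneg

theorem IsHermitian.trace_conj_mul_nonneg {X P Q : Matrix ι ι 𝕜} (hX : X.IsHermitian)
    (hP : 0 ≤ P) (hQ : 0 ≤ Q) : 0 ≤ (X * P * X * Q).trace := by
  have hXPX := hP.posSemidef.mul_mul_conjTranspose_same X
  rw [hX.eq] at hXPX
  exact hXPX.trace_mul_nonneg hQ.posSemidef

theorem IsHermitian.trace_conj_mul_le_trace_conj_mul {X P P' Q Q' : Matrix ι ι 𝕜}
    (hX : X.IsHermitian) (hP' : 0 ≤ P') (hP : P' ≤ P) (hQ' : 0 ≤ Q') (hQ : Q' ≤ Q) :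
    (X * P' * X * Q').trace ≤ (X * P * X * Q).trace := by
  have hsplit : X * P * X * Q - X * P' * X * Q' =
      X * (P - P') * X * Q + X * P' * X * (Q - Q') := by
    noncomm_ring
  rw [← sub_nonneg, ← trace_sub, hsplit, trace_add]
  exact add_nonneg (hX.trace_conj_mul_nonneg (sub_nonneg.mpr hP) (hQ'.trans hQ))
    (hX.trace_conj_mul_nonneg hP' (sub_nonneg.mpr hQ))

open scoped Matrix.Norms.L2Operator in
theorem PosDef.inv_le_inv [DecidableEq ι] {A B : Matrix ι ι ℂ} (hA : A.PosDef) (hAB : A ≤ B) :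
    B⁻¹ ≤ A⁻¹ := by
  simpa only [nonsing_inv_eq_ringInverse] using
    CStarAlgebra.ringInverse_le_ringInverse hAB (isStrictlyPositive_iff_posDef.mpr hA)

end Matrix

theorem Complex.im_eq_zero_and_re_le_of_nonneg_of_le {w z : ℂ} (hw : 0 ≤ w) (hwz : w ≤ z) :
    z.im = 0 ∧ w.im = 0 ∧ w.re ≤ z.re := by
  obtain ⟨-, hw⟩ := Complex.le_def.mp hw
  obtain ⟨hre, him⟩ := Complex.le_def.mp hwz
  exact ⟨him ▸ hw.symm, hw.symm, hre⟩

theorem trace_first_term_bound {n : ℕ} (A B C D : Matrix (Fin n) (Fin n) ℂ)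
    (hA : A.PosDef) (hB : B.PosDef) (hC : C.PosSemidef) (hD : D.PosSemidef) :
    (((A - B) * (B⁻¹ - A⁻¹)).trace).im = 0 ∧
    (((A - B) * (B + D)⁻¹ * (A - B) * (A + C)⁻¹).trace).im = 0 ∧
    (((A - B) * (B⁻¹ - A⁻¹)).trace).re ≥
      (((A - B) * (B + D)⁻¹ * (A - B) * (A + C)⁻¹).trace).re := by
  have hX : (A - B).IsHermitian := hA.isHermitian.sub hB.isHermitian
  have hAC : (A + C)⁻¹ ≤ A⁻¹ := hA.inv_le_inv (le_add_of_nonneg_right hC.nonneg)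
  have hBD : (B + D)⁻¹ ≤ B⁻¹ := hB.inv_le_inv (le_add_of_nonneg_right hD.nonneg)
  have hAC_nonneg : 0 ≤ (A + C)⁻¹ := (hA.add_posSemidef hC).inv.posSemidef.nonneg
  have hBD_nonneg : 0 ≤ (B + D)⁻¹ := (hB.add_posSemidef hD).inv.posSemidef.nonneg
  have hlhs : (A - B) * (B⁻¹ - A⁻¹) = (A - B) * B⁻¹ * (A - B) * A⁻¹ := by
    rw [inv_sub_inv (iff_of_true hB.isUnit hA.isUnit), ← mul_assoc, ← mul_assoc]
  rw [hlhs, ge_iff_le]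
  exact Complex.im_eq_zero_and_re_le_of_nonneg_of_le
    (hX.trace_conj_mul_nonneg hBD_nonneg hAC_nonneg)
    (hX.trace_conj_mul_le_trace_conj_mul hBD_nonneg hBD hAC_nonneg hAC)
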